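/- Let $V$ be a finite-dimensional complex inner-product space with orthogonal decomposition $V = \bigoplus_{i=1}^{d} V_i$. For $1 \le j < k \le d$, let $f_{jk} : V_j \otimes V_k \to \wedge^2 V$ be the isometric embedding determined by $x \otimes y \mapsto x \wedge y$ for $x \in V_j$, $y \in V_k$. Suppose $X_i \subset \wedge^2 V_i$ is an FUPB in $\wedge^2 V_i$ for each $i$, and $Y_{jk} \subset V_j \otimes V_k$ is a UPB for each $j < k$. Then the union $Z$ of all $X_i$ and all $f_{jk}(Y_{jk})$ is an FUPB in $\wedge^2 V$: $Z$ is a pairwise orthogonal set of nonzero decomposable 2-vectors, and any decomposable 2-vector $x \wedge y$ (with $x, y \in V$) orthogonal to all of $Z$ is zero. -/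

import Mathlib

open scoped InnerProductSpace

noncomputable section

/-- The `N`-fold tensor power of `ℂ^M`, realized as the Euclidean space with
orthonormal basis indexed by multi-indices `Fin N → Fin M`. -/
abbrev TensorPow (N M : ℕ) : Type := EuclideanSpace ℂ (Fin N → Fin M)

/-- The wedge (Slater determinant) of a family of `N` vectors in `ℂ^M`:
`|v 0⟩ ∧ ⋯ ∧ |v (N-1)⟩ = ∑ σ, sgn σ • |v σ(0), …, v σ(N-1)⟩`. -/
def wedge {N M : ℕ} (v : Fin N → EuclideanSpace ℂ (Fin M)) : TensorPow N M :=
  WithLp.toLp 2 (fun x => ∑ σ : Equiv.Perm (Fin N), ((Equiv.Perm.sign σ : ℤ) : ℂ) * ∏ k, v (σ k) (x k))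

/-- The exterior power `⋀^N ℂ^M`, i.e. the subspace of antisymmetric tensors
in `(ℂ^M)^{⊗N}`. -/
def exteriorPow (N M : ℕ) : Submodule ℂ (TensorPow N M) where
  carrier := {ψ | ∀ σ : Equiv.Perm (Fin N), ∀ x : Fin N → Fin M,
    ψ (x ∘ σ) = ((Equiv.Perm.sign σ : ℤ) : ℂ) * ψ x}
  add_mem' := by
    intro a b ha hb σ x
    have h1 := ha σ x
    have h2 := hb σ x
    show a (x ∘ σ) + b (x ∘ σ) = ((Equiv.Perm.sign σ : ℤ) : ℂ) * (a x + b x)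
    rw [h1, h2]; ring
  zero_mem' := by
    intro σ x
    show (0 : ℂ) = ((Equiv.Perm.sign σ : ℤ) : ℂ) * (0 : ℂ)
    ring
  smul_mem' := by
    intro c a ha σ x
    have h1 := ha σ x
    show c * a (x ∘ σ) = ((Equiv.Perm.sign σ : ℤ) : ℂ) * (c * a x)
    rw [h1]; ring

/-- A decomposable (Slater determinant) vector in `⋀^N ℂ^M`. -/
def IsSlater {N M : ℕ} (ψ : TensorPow N M) : Prop :=
  ∃ v : Fin N → EuclideanSpace ℂ (Fin M), ψ = wedge v

/-!
Write `x = ∑ uᵢ` and `y = ∑ vᵢ` with `uᵢ, vᵢ ∈ Vᵢ`, so that `x ∧ y = ∑ⱼ ∑ₖ uⱼ ∧ vₖ`. By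
`⟪a ∧ b, c ∧ e⟫ = 2 (⟪a, c⟫⟪b, e⟫ - ⟪a, e⟫⟪b, c⟫)`, pairing `x ∧ y` with a wedge of two vectors of
`Vᵢ` only sees `uᵢ ∧ vᵢ`, so the FUPB `Xᵢ` kills the diagonal terms; then `uⱼ ∥ vⱼ`, and pairing
with `f_{jk}(Y_{jk})` only sees the product vector `uⱼ ⊗ vₖ - vⱼ ⊗ uₖ`, so the UPB `Y_{jk}` makes
the off-diagonal terms antisymmetric. The same inner product formula gives the orthogonality of
wedges taken from different blocks.
-/

theorem Finset.sum_sum_eq_zero_of_antisymm {ι G : Type*} [Fintype ι] [LinearOrder ι]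
    [AddCommMonoid G] {f : ι → ι → G} (hdiag : ∀ i, f i i = 0)
    (hlt : ∀ i j, i < j → f i j + f j i = 0) :
    ∑ i, ∑ j, f i j = 0 := by
  rw [← Finset.sum_product' Finset.univ Finset.univ f]
  refine Finset.sum_involution (fun p _ => p.swap) (fun ⟨i, j⟩ _ => ?_) (fun ⟨i, j⟩ _ hf h => ?_)
    (fun p _ => Finset.mem_product.mpr ⟨Finset.mem_univ _, Finset.mem_univ _⟩) (fun p _ => p.swap_swap)
  · rcases lt_trichotomy i j with h | rfl | h
    · exact hlt i j h
    · simp [hdiag]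
    · exact (add_comm _ _).trans (hlt j i h)
  · obtain rfl : j = i := (Prod.mk.inj h).1
    exact hf (hdiag j)

theorem Submodule.exists_sum_eq_of_iSup_eq_top {ι R E : Type*} [Fintype ι] [Semiring R]
    [AddCommMonoid E] [Module R E] {V : ι → Submodule R E} (hsup : ⨆ i, V i = ⊤) (x : E) :
    ∃ u : ι → E, (∀ i, u i ∈ V i) ∧ ∑ i, u i = x := by
  obtain ⟨f, hf, hsum⟩ := (Submodule.mem_iSup_iff_exists_finsupp V x).mp (hsup ▸ Submodule.mem_top)
  exact ⟨f, hf, by rw [← hsum, Finsupp.sum_fintype _ _ fun _ => rfl]⟩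

section OrthogonalSubmodules

variable {ι 𝕜 E : Type*} [Fintype ι] [RCLike 𝕜] [NormedAddCommGroup E] [InnerProductSpace 𝕜 E]
  {V : ι → Submodule 𝕜 E}

theorem inner_sum_eq_of_mem (horth : ∀ i j, i ≠ j → ∀ x ∈ V i, ∀ y ∈ V j, ⟪x, y⟫_𝕜 = 0)
    {i : ι} {a : E} (ha : a ∈ V i) {u : ι → E} (hu : ∀ j, u j ∈ V j) :
    ⟪a, ∑ j, u j⟫_𝕜 = ⟪a, u i⟫_𝕜 := by
  rw [inner_sum]
  exact Finset.sum_eq_single i (fun j _ hji => horth i j (Ne.symm hji) a ha (u j) (hu j))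
    (fun h => absurd (Finset.mem_univ i) h)

end OrthogonalSubmodules

section Wedge

variable {M : ℕ}

theorem wedge_apply (a b : EuclideanSpace ℂ (Fin M)) (x : Fin 2 → Fin M) :
    wedge ![a, b] x = a (x 0) * b (x 1) - b (x 0) * a (x 1) := by
  rw [wedge, WithLp.ofLp_toLp, show (Finset.univ : Finset (Equiv.Perm (Fin 2))) =
    {Equiv.refl (Fin 2), Equiv.swap 0 1} from by decide,
    Finset.sum_insert (by decide), Finset.sum_singleton]
  simp [Fin.prod_univ_two]
  ring

def wedge₂ : EuclideanSpace ℂ (Fin M) →ₗ[ℂ] EuclideanSpace ℂ (Fin M) →ₗ[ℂ] TensorPow 2 M :=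
  LinearMap.mk₂ ℂ (fun a b => wedge ![a, b])
    (fun _ _ _ => by ext; simp [wedge_apply]; ring)
    (fun _ _ _ => by ext; simp [wedge_apply]; ring)
    (fun _ _ _ => by ext; simp [wedge_apply]; ring)
    (fun _ _ _ => by ext; simp [wedge_apply]; ring)

theorem wedge₂_apply (a b : EuclideanSpace ℂ (Fin M)) : wedge₂ a b = wedge ![a, b] := rfl

theorem wedge_smul_sub_smul (α β : ℂ) (w c e : EuclideanSpace ℂ (Fin M)) :
    wedge ![α • w, e] + wedge ![c, β • w] = wedge ![w, α • e - β • c] := by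
  ext; simp [wedge_apply]; ring

theorem wedge_sum_sum {ι : Type*} [Fintype ι] (u v : ι → EuclideanSpace ℂ (Fin M)) :
    wedge ![∑ i, u i, ∑ j, v j] = ∑ i, ∑ j, wedge ![u i, v j] := by
  simp only [← wedge₂_apply, map_sum, LinearMap.sum_apply]
  exact Finset.sum_comm

theorem sum_fin_two_arrow {α : Type*} [AddCommMonoid α] (f : (Fin 2 → Fin M) → α) :
    ∑ t, f t = ∑ p : Fin M, ∑ q : Fin M, f ![p, q] := by
  rw [← (finTwoArrowEquiv (Fin M)).symm.sum_comp f, Fintype.sum_prod_type]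
  rfl

theorem inner_wedge (a b c e : EuclideanSpace ℂ (Fin M)) :
    ⟪wedge ![a, b], wedge ![c, e]⟫_ℂ = 2 * (⟪a, c⟫_ℂ * ⟪b, e⟫_ℂ - ⟪a, e⟫_ℂ * ⟪b, c⟫_ℂ) := by
  simp only [PiLp.inner_apply, RCLike.inner_apply', sum_fin_two_arrow, wedge_apply,
    Matrix.cons_val_zero, Matrix.cons_val_one, map_sub, map_mul, Finset.sum_mul_sum]
  have hsymm : ∀ f : Fin M → Fin M → ℂ, ∑ p, ∑ q, (f p q + f q p) = 2 * ∑ p, ∑ q, f p q :=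
    fun f => by simp only [Finset.sum_add_distrib]; rw [Finset.sum_comm (f := fun p q => f q p)]; ring
  rw [mul_sub, ← hsymm, ← hsymm, ← Finset.sum_sub_distrib]
  refine Finset.sum_congr rfl fun p _ => ?_
  rw [← Finset.sum_sub_distrib]
  exact Finset.sum_congr rfl fun q _ => by ring

theorem wedge_ne_zero_of_inner_eq_zero {a b : EuclideanSpace ℂ (Fin M)} (hab : ⟪a, b⟫_ℂ = 0)
    (ha : a ≠ 0) (hb : b ≠ 0) : wedge ![a, b] ≠ 0 := by
  intro h
  have hself := inner_wedge a b a b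
  rw [h, inner_zero_left, hab, inner_eq_zero_symm.mp hab] at hself
  have : ⟪a, a⟫_ℂ * ⟪b, b⟫_ℂ = 0 := by linear_combination -hself / 2
  exact mul_ne_zero (inner_self_ne_zero.mpr ha) (inner_self_ne_zero.mpr hb) this

theorem exists_eq_smul_of_wedge_eq_zero {S : Submodule ℂ (EuclideanSpace ℂ (Fin M))}
    {a b : EuclideanSpace ℂ (Fin M)} (ha : a ∈ S) (hb : b ∈ S) (h : wedge ![a, b] = 0) :
    ∃ w ∈ S, ∃ α β : ℂ, a = α • w ∧ b = β • w := by
  by_cases ha0 : a = 0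
  · exact ⟨b, hb, 0, 1, by simp [ha0], by simp⟩
  obtain ⟨p, hp⟩ : ∃ p, a p ≠ 0 := by
    by_contra! hc
    exact ha0 (by ext i; simpa using hc i)
  refine ⟨a, ha, 1, b p / a p, by simp, ?_⟩
  ext q
  have hpq := congrFun (congrArg WithLp.ofLp h) ![p, q]
  simp only [wedge_apply] at hpq
  simp at hpq ⊢
  field_simp
  linear_combination hpq

section Blocks

variable {ι : Type*} {V : ι → Submodule ℂ (EuclideanSpace ℂ (Fin M))}

theorem inner_wedge_eq_zero_of_blocks_ne [LinearOrder ι]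
    (horth : ∀ i j, i ≠ j → ∀ x ∈ V i, ∀ y ∈ V j, ⟪x, y⟫_ℂ = 0)
    {p q r s : ι} (hpq : p ≤ q) (hrs : r ≤ s) (hne : (p, q) ≠ (r, s))
    {a b c e : EuclideanSpace ℂ (Fin M)} (ha : a ∈ V p) (hb : b ∈ V q) (hc : c ∈ V r)
    (he : e ∈ V s) :
    ⟪wedge ![a, b], wedge ![c, e]⟫_ℂ = 0 := by
  have h₁ : ⟪a, c⟫_ℂ * ⟪b, e⟫_ℂ = 0 := by
    by_cases hpr : p = r
    · subst hpr
      rw [horth q s (fun h => hne (by rw [h])) b hb e he, mul_zero]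
    · rw [horth p r hpr a ha c hc, zero_mul]
  have h₂ : ⟪a, e⟫_ℂ * ⟪b, c⟫_ℂ = 0 := by
    by_cases hps : p = s
    · subst hps
      rw [horth q r (fun h => hne (by subst h; simp [le_antisymm hpq hrs])) b hb c hc, mul_zero]
    · rw [horth p s hps a ha e he, zero_mul]
  rw [inner_wedge, h₁, h₂, sub_zero, mul_zero]

theorem inner_wedge_sum_sum [Fintype ι] (horth : ∀ i j, i ≠ j → ∀ x ∈ V i, ∀ y ∈ V j, ⟪x, y⟫_ℂ = 0)
    {p q : ι} {a b : EuclideanSpace ℂ (Fin M)} (ha : a ∈ V p) (hb : b ∈ V q)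
    {u v : ι → EuclideanSpace ℂ (Fin M)} (hu : ∀ i, u i ∈ V i) (hv : ∀ i, v i ∈ V i) :
    ⟪wedge ![a, b], wedge ![∑ i, u i, ∑ i, v i]⟫_ℂ =
      2 * (⟪a, u p⟫_ℂ * ⟪b, v q⟫_ℂ - ⟪a, v p⟫_ℂ * ⟪b, u q⟫_ℂ) := by
  rw [inner_wedge, inner_sum_eq_of_mem horth ha hu, inner_sum_eq_of_mem horth ha hv,
    inner_sum_eq_of_mem horth hb hu, inner_sum_eq_of_mem horth hb hv]

end Blocks

/-- Since `a = α w` and `b = β w`, the tensor `a ⊗ e - b ⊗ c = w ⊗ (α e - β c)` is a product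
vector, which the unextendible product basis `B` forces to vanish. -/
theorem wedge_add_wedge_eq_zero_of_upb {κ : Type*} {S T : Submodule ℂ (EuclideanSpace ℂ (Fin M))}
    {B : κ → EuclideanSpace ℂ (Fin M) × EuclideanSpace ℂ (Fin M)}
    (hB : ∀ x y, x ∈ S → y ∈ T → (∀ l, ⟪(B l).1, x⟫_ℂ * ⟪(B l).2, y⟫_ℂ = 0) → x = 0 ∨ y = 0)
    {a b c e : EuclideanSpace ℂ (Fin M)} (ha : a ∈ S) (hb : b ∈ S) (hab : wedge ![a, b] = 0)
    (hc : c ∈ T) (he : e ∈ T)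
    (h : ∀ l, ⟪(B l).1, a⟫_ℂ * ⟪(B l).2, e⟫_ℂ - ⟪(B l).1, b⟫_ℂ * ⟪(B l).2, c⟫_ℂ = 0) :
    wedge ![a, e] + wedge ![c, b] = 0 := by
  obtain ⟨w, hw, α, β, rfl, rfl⟩ := exists_eq_smul_of_wedge_eq_zero ha hb hab
  have hprod : ∀ l, ⟪(B l).1, w⟫_ℂ * ⟪(B l).2, α • e - β • c⟫_ℂ = 0 := fun l => by
    have hl := h l
    simp only [inner_sub_right, inner_smul_right] at hl ⊢
    linear_combination hl
  rw [wedge_smul_sub_smul]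
  rcases hB w _ hw (T.sub_mem (T.smul_mem α he) (T.smul_mem β hc)) hprod with h0 | h0 <;>
    simp [h0, ← wedge₂_apply]

end Wedge

/-- Composition of FUPBs and UPBs: if `V = ⊕ᵢ Vᵢ` is an orthogonal decomposition of
`V = ℂ^M`, each `Xᵢ` (given by the pairs `A i l`) is an FUPB in `⋀² Vᵢ`, and each
`Y_{jk}` (given by the pairs `B j k l`, `j < k`) is a UPB in `Vⱼ ⊗ Vₖ`, then the
union `Z` of the `Xᵢ` and of the wedges of the `Y_{jk}` is an FUPB in `⋀² V`. -/
theorem FUPB_from_blocks (M d : ℕ)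
    (V : Fin d → Submodule ℂ (EuclideanSpace ℂ (Fin M)))
    (horth : ∀ i j, i ≠ j → ∀ x ∈ V i, ∀ y ∈ V j, ⟪x, y⟫_ℂ = 0)
    (hsup : (⨆ i, V i) = ⊤)
    (m : Fin d → ℕ)
    (A : (i : Fin d) → Fin (m i) →
      EuclideanSpace ℂ (Fin M) × EuclideanSpace ℂ (Fin M))
    (hA1 : ∀ i l, (A i l).1 ∈ V i ∧ (A i l).2 ∈ V i)
    (hA2 : ∀ i l, wedge ![(A i l).1, (A i l).2] ≠ 0)
    (hA3 : ∀ i, ∀ l l', l ≠ l' →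
      ⟪wedge ![(A i l).1, (A i l).2], wedge ![(A i l').1, (A i l').2]⟫_ℂ = 0)
    (hA4 : ∀ i, ∀ u v, u ∈ V i → v ∈ V i →
      (∀ l, ⟪wedge ![(A i l).1, (A i l).2], wedge ![u, v]⟫_ℂ = 0) →
      wedge ![u, v] = 0)
    (n : Fin d → Fin d → ℕ)
    (B : (j k : Fin d) → Fin (n j k) →
      EuclideanSpace ℂ (Fin M) × EuclideanSpace ℂ (Fin M))
    (hB1 : ∀ j k, j < k → ∀ l, (B j k l).1 ∈ V j ∧ (B j k l).2 ∈ V k)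
    (hB2 : ∀ j k, j < k → ∀ l, (B j k l).1 ≠ 0 ∧ (B j k l).2 ≠ 0)
    (hB3 : ∀ j k, j < k → ∀ l l', l ≠ l' →
      ⟪(B j k l).1, (B j k l').1⟫_ℂ * ⟪(B j k l).2, (B j k l').2⟫_ℂ = 0)
    (hB4 : ∀ j k, j < k → ∀ x y, x ∈ V j → y ∈ V k →
      (∀ l, ⟪(B j k l).1, x⟫_ℂ * ⟪(B j k l).2, y⟫_ℂ = 0) → x = 0 ∨ y = 0) :
    (∀ φ ∈ ({φ | ∃ i l, φ = wedge ![(A i l).1, (A i l).2]} ∪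
        {φ | ∃ j k, ∃ _ : j < k, ∃ l, φ = wedge ![(B j k l).1, (B j k l).2]} :
        Set (TensorPow 2 M)),
      IsSlater φ ∧ φ ≠ 0) ∧
    (∀ φ ∈ ({φ | ∃ i l, φ = wedge ![(A i l).1, (A i l).2]} ∪
        {φ | ∃ j k, ∃ _ : j < k, ∃ l, φ = wedge ![(B j k l).1, (B j k l).2]} :
        Set (TensorPow 2 M)),
      ∀ φ' ∈ ({φ | ∃ i l, φ = wedge ![(A i l).1, (A i l).2]} ∪
        {φ | ∃ j k, ∃ _ : j < k, ∃ l, φ = wedge ![(B j k l).1, (B j k l).2]} :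
        Set (TensorPow 2 M)),
      φ ≠ φ' → ⟪φ, φ'⟫_ℂ = 0) ∧
    (∀ x y : EuclideanSpace ℂ (Fin M),
      (∀ φ ∈ ({φ | ∃ i l, φ = wedge ![(A i l).1, (A i l).2]} ∪
        {φ | ∃ j k, ∃ _ : j < k, ∃ l, φ = wedge ![(B j k l).1, (B j k l).2]} :
        Set (TensorPow 2 M)),
        ⟪φ, wedge ![x, y]⟫_ℂ = 0) →
      wedge ![x, y] = 0) := by
  refine ⟨?_, ?_, ?_⟩
  · rintro φ (⟨i, l, rfl⟩ | ⟨j, k, hjk, l, rfl⟩)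
    · exact ⟨⟨_, rfl⟩, hA2 i l⟩
    · exact ⟨⟨_, rfl⟩, wedge_ne_zero_of_inner_eq_zero
        (horth j k hjk.ne _ (hB1 j k hjk l).1 _ (hB1 j k hjk l).2) (hB2 j k hjk l).1 (hB2 j k hjk l).2⟩
  · rintro φ (⟨i, l, rfl⟩ | ⟨j, k, hjk, l, rfl⟩) φ' (⟨i', l', rfl⟩ | ⟨j', k', hjk', l', rfl⟩) hne
    · obtain rfl | hii := eq_or_ne i i'
      · exact hA3 i l l' fun h => hne (by rw [h])
      · exact inner_wedge_eq_zero_of_blocks_ne horth le_rfl le_rfl (by simp [hii])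
          (hA1 i l).1 (hA1 i l).2 (hA1 i' l').1 (hA1 i' l').2
    · exact inner_wedge_eq_zero_of_blocks_ne horth le_rfl hjk'.le (fun h => hjk'.ne ((Prod.mk.inj h).1.symm.trans (Prod.mk.inj h).2))
        (hA1 i l).1 (hA1 i l).2 (hB1 j' k' hjk' l').1 (hB1 j' k' hjk' l').2
    · exact inner_wedge_eq_zero_of_blocks_ne horth hjk.le le_rfl (fun h => hjk.ne ((Prod.mk.inj h).1.trans (Prod.mk.inj h).2.symm))
        (hB1 j k hjk l).1 (hB1 j k hjk l).2 (hA1 i' l').1 (hA1 i' l').2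
    · by_cases hblock : (j, k) = (j', k')
      · obtain ⟨rfl, rfl⟩ := Prod.mk.inj hblock
        rw [inner_wedge, horth j k hjk.ne _ (hB1 j k hjk l).1 _ (hB1 j k hjk' l').2]
        linear_combination 2 * hB3 j k hjk l l' fun h => hne (by rw [h])
      · exact inner_wedge_eq_zero_of_blocks_ne horth hjk.le hjk'.le hblock
          (hB1 j k hjk l).1 (hB1 j k hjk l).2 (hB1 j' k' hjk' l').1 (hB1 j' k' hjk' l').2
  · intro x y hxy
    obtain ⟨u, hu, rfl⟩ := Submodule.exists_sum_eq_of_iSup_eq_top hsup x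
    obtain ⟨v, hv, rfl⟩ := Submodule.exists_sum_eq_of_iSup_eq_top hsup y
    have hdiag : ∀ i, wedge ![u i, v i] = 0 := fun i =>
      hA4 i _ _ (hu i) (hv i) fun l => by
        rw [inner_wedge, ← inner_wedge_sum_sum horth (hA1 i l).1 (hA1 i l).2 hu hv]
        exact hxy _ (Or.inl ⟨i, l, rfl⟩)
    have hcross : ∀ j k, j < k → wedge ![u j, v k] + wedge ![u k, v j] = 0 := fun j k hjk =>
      wedge_add_wedge_eq_zero_of_upb (hB4 j k hjk) (hu j) (hv j) (hdiag j) (hu k) (hv k) fun l => by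
        have hl := hxy _ (Or.inr ⟨j, k, hjk, l, rfl⟩)
        rw [inner_wedge_sum_sum horth (hB1 j k hjk l).1 (hB1 j k hjk l).2 hu hv] at hl
        linear_combination hl / 2
    rw [wedge_sum_sum]
    exact Finset.sum_sum_eq_zero_of_antisymm hdiag hcross
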